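/- With H_{1,n} and H_{2,n} as above, for all n ≥ 2 the identity n·H_{2,n}(k) = (2k+1)·H_{2,n−1}(k) + (1/2)·(n·H_{1,n−1}(k) + (n−2)(2k+1)·H_{1,n−2}(k)) holds as polynomials in k. -/

import Mathlib

open PowerSeries

/-- `H_{1,n}(k) = ∑_{j=0}^{n} C(n,j) C(k+n-j, n)`. -/
def H1 (n k : ℕ) : ℕ := ∑ j ∈ Finset.range (n + 1), n.choose j * (k + n - j).choose n

/-!
On generating functions, multiplying the `k`-th coefficient by `2k + 1` is the operator
`2 X d/dX + 1`, and differentiating `P / (1 - X)^(d+1)` gives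
`((1 - X) P' + (d + 1) P) / (1 - X)^(d+2)`. Hence both sides of the recurrence have generating
functions of the form `Q / (1 - X)^(n+2)` with explicit `Q`; clearing the denominator and
`1 + X` (which absorbs the derivative of `(1 + X)^m`) leaves a ring identity.
-/

variable {R : Type*}

theorem X_pow_mul_mk_choose [CommSemiring R] {p j : ℕ} (hj : j ≤ p) :
    X ^ j * (mk fun k => ((p + k).choose p : R)) = mk fun k => ((k + p - j).choose p : R) := by
  ext k
  rw [coeff_mk, coeff_X_pow_mul']
  split_ifs with h
  · rw [coeff_mk]
    congr 2
    omega
  · rw [Nat.choose_eq_zero_of_lt (by omega), Nat.cast_zero]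

theorem mk_H1_mul_one_sub_X_pow [CommRing R] (p : ℕ) :
    (mk fun k => (H1 p k : R)) * (1 - X) ^ (p + 1) = (1 + X) ^ p := by
  have hsum : (mk fun k => (H1 p k : R)) = ∑ j ∈ Finset.range (p + 1),
      C (p.choose j : R) * mk fun k => ((k + p - j).choose p : R) := by
    ext k
    simp only [H1, Nat.cast_sum, Nat.cast_mul, coeff_mk, map_sum, coeff_C_mul]
  rw [hsum, Finset.sum_mul, add_comm (1 : R⟦X⟧), add_pow]
  refine Finset.sum_congr rfl fun j hj => ?_
  rw [← X_pow_mul_mk_choose (Finset.mem_range_succ_iff.mp hj), mul_assoc, mul_assoc,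
    mk_add_choose_mul_one_sub_pow_eq_one, mul_one, one_pow, mul_one, map_natCast, mul_comm]

theorem mk_two_mul_add_one_mul [CommRing R] (f : ℕ → R) :
    (mk fun k => (2 * k + 1) * f k) = 2 * X * d⁄dX R (mk f) + mk f := by
  ext (_ | k)
  · simp
  · rw [mul_comm (2 : R⟦X⟧), mul_assoc, map_add, coeff_succ_X_mul, ← map_ofNat C, coeff_C_mul,
      coeff_derivative]
    simp only [coeff_mk, Nat.cast_add, Nat.cast_one]
    ring

theorem derivative_mul_one_sub_X_pow_eq [CommRing R] {F P : R⟦X⟧} {d : ℕ}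
    (h : F * (1 - X) ^ (d + 1) = P) :
    d⁄dX R F * (1 - X) ^ (d + 2) = (1 - X) * d⁄dX R P + (d + 1 : R⟦X⟧) * P := by
  subst h
  simp only [Derivation.leibniz, Derivation.leibniz_pow, smul_eq_mul, nsmul_eq_mul, map_sub,
    derivative_X, derivative_one, Nat.add_sub_cancel]
  push_cast
  ring

theorem mk_two_mul_add_one_mul_mul_one_sub_X_pow [CommRing R] {f : ℕ → R} {P : R⟦X⟧} {d : ℕ}
    (h : mk f * (1 - X) ^ (d + 1) = P) :
    (mk fun k => (2 * k + 1) * f k) * (1 - X) ^ (d + 2)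
      = 2 * X * ((1 - X) * d⁄dX R P + (d + 1 : R⟦X⟧) * P) + (1 - X) * P := by
  rw [mk_two_mul_add_one_mul, add_mul, mul_assoc, derivative_mul_one_sub_X_pow_eq h, pow_succ,
    ← mul_assoc, h]
  ring

theorem one_add_X_mul_derivative_pow [CommSemiring R] (m : ℕ) :
    (1 + X) * d⁄dX R ((1 + X) ^ m) = (m : R⟦X⟧) * (1 + X) ^ m := by
  cases m with
  | zero => simp
  | succ m =>
    rw [Derivation.leibniz_pow]
    simp only [add_tsub_cancel_right, map_add, Derivation.map_one_eq_zero, derivative_X, zero_add,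
      smul_eq_mul, mul_one, nsmul_eq_mul, Nat.cast_add, Nat.cast_one]
    ring

theorem H2_recurrence_of_mk_mul_one_sub_X_pow [CommRing R] (m : ℕ) {a b : ℕ → R}
    (ha : mk a * (1 - X) ^ (m + 3) = (1 + X) ^ m * (1 + 2 * (m + 1 : R⟦X⟧) * X + X ^ 2))
    (hb : mk b * (1 - X) ^ (m + 4) = (1 + X) ^ (m + 1) * (1 + 2 * (m + 2 : R⟦X⟧) * X + X ^ 2))
    (k : ℕ) :
    2 * (m + 2) * b k
      = 2 * ((2 * k + 1) * a k) + (m + 2) * H1 (m + 1) k + m * ((2 * k + 1) * H1 m k) := by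
  have hTa := mk_two_mul_add_one_mul_mul_one_sub_X_pow ha
  have hF1 := mk_H1_mul_one_sub_X_pow (R := R) (m + 1)
  have hTF0 := mk_two_mul_add_one_mul_mul_one_sub_X_pow (mk_H1_mul_one_sub_X_pow (R := R) m)
  have hY := one_add_X_mul_derivative_pow (R := R) m
  have hq : d⁄dX R (1 + 2 * (m + 1 : R⟦X⟧) * X + X ^ 2) = 2 * ((m : R⟦X⟧) + 1) + 2 * X := by
    have h2 : d⁄dX R (2 : R⟦X⟧) = 0 := by exact_mod_cast Derivation.map_natCast (d⁄dX R) 2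
    simp [Derivation.leibniz, Derivation.leibniz_pow, h2, Derivation.map_natCast]
  rw [Derivation.leibniz, hq, smul_eq_mul, smul_eq_mul] at hTa
  push_cast at hTa
  have hu : IsUnit ((1 - X : R⟦X⟧) ^ (m + 4) * (1 + X)) := by
    simp [isUnit_iff_constantCoeff]
  have hseries : C ((2 * (m + 2) : ℕ) : R) * mk b = C 2 * mk (fun k => (2 * k + 1) * a k)
      + C ((m + 2 : ℕ) : R) * mk (fun k => (H1 (m + 1) k : R))
      + C (m : R) * mk (fun k => (2 * k + 1) * (H1 m k : R)) := by
    simp only [map_natCast, map_ofNat]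
    push_cast
    rw [← hu.mul_left_inj]
    linear_combination (2 * ((m : R⟦X⟧) + 2) * (1 + X)) * hb - 2 * (1 + X) * hTa
      - ((m : R⟦X⟧) + 2) * (1 - X) ^ 2 * (1 + X) * hF1
      - (m : R⟦X⟧) * (1 - X) ^ 2 * (1 + X) * hTF0
      - (4 * X * (1 - X) * (1 + 2 * (m + 1 : R⟦X⟧) * X + X ^ 2) + 2 * m * X * (1 - X) ^ 3) * hY
  have hcoeff := congrArg (coeff k) hseries
  simp only [map_add, coeff_C_mul, coeff_mk] at hcoeff
  exact_mod_cast hcoeff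

theorem H2n_relation_two (n : ℕ) (hn : 2 ≤ n) (H2 : ℕ → Polynomial ℚ)
    (hH2 : ∀ m : ℕ, 1 ≤ m →
      (PowerSeries.mk fun k => (H2 m).eval (k : ℚ)) * (1 - PowerSeries.X) ^ (m + 2)
        = (1 + PowerSeries.X) ^ (m - 1)
          * (1 + PowerSeries.C (R := ℚ) (2 * m) * PowerSeries.X + PowerSeries.X ^ 2)) :
    ∀ k : ℕ,
      (n : ℚ) * (H2 n).eval (k : ℚ)
        = (2 * k + 1) * (H2 (n - 1)).eval (k : ℚ)
          + (1/2 : ℚ) * ((n : ℚ) * (H1 (n - 1) k : ℚ)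
              + ((n : ℚ) - 2) * (2 * k + 1) * (H1 (n - 2) k : ℚ)) := by
  obtain ⟨m, rfl⟩ : ∃ m, n = m + 2 := ⟨n - 2, by omega⟩
  intro k
  have ha := hH2 (m + 1) (by omega)
  have hb := hH2 (m + 2) (by omega)
  simp only [map_mul, map_natCast, map_ofNat, Nat.add_sub_cancel] at ha hb
  push_cast at ha hb
  have hrec := H2_recurrence_of_mk_mul_one_sub_X_pow m ha hb k
  rw [show m + 2 - 1 = m + 1 from rfl, Nat.add_sub_cancel]
  push_cast
  linear_combination hrec / 2
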